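/- arXiv:math/0604280 — 3 statements merged into one kernel-verified Lean document; each statement's English description precedes it below -/
import Mathlib

section
/- For every natural number n, F_{2n+1} = Σ_{j ∈ ℤ} [ C(2n+1, n-5j) - C(2n+1, n-5j-1) ]. -/
/-- Binomial coefficient `C(m, j)` with integer lower index, zero when `j < 0`. -/
def icho (m : ℕ) (j : ℤ) : ℤ := if 0 ≤ j then (m.choose j.toNat : ℤ) else 0

lemma icho_eq_zero_of_lt {m : ℕ} {k : ℤ} (h : (m : ℤ) < k) : icho m k = 0 := by
  unfold icho
  split
  · norm_cast
    apply Nat.choose_eq_zero_of_lt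
    omega
  · rfl

lemma icho_eq_zero_of_neg {m : ℕ} {k : ℤ} (h : k < 0) : icho m k = 0 := by
  unfold icho; split <;> [omega; rfl]

lemma icho_pascal (m : ℕ) (k : ℤ) : icho (m + 1) k = icho m k + icho m (k - 1) := by
  unfold icho
  rcases lt_trichotomy k 0 with h | h | h
  · rw [if_neg (by omega), if_neg (by omega), if_neg (by omega)]; ring
  · subst h; norm_num
  · rw [if_pos (by omega), if_pos (by omega), if_pos (by omega)]
    have h1 : k.toNat = (k - 1).toNat + 1 := by omega
    rw [h1, Nat.choose_succ_succ]
    push_cast; ring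

lemma icho_symm (m : ℕ) (k : ℤ) : icho m k = icho m ((m : ℤ) - k) := by
  rcases lt_trichotomy k 0 with h | h | h
  · rw [icho_eq_zero_of_neg h, icho_eq_zero_of_lt (by omega)]
  · subst h; simp [icho]
  · rcases le_or_gt k m with h2 | h2
    · unfold icho
      rw [if_pos (by omega), if_pos (by omega)]
      have : ((m:ℤ) - k).toNat = m - k.toNat := by omega
      rw [this, Nat.choose_symm (show k.toNat ≤ m by omega)]
    · rw [icho_eq_zero_of_lt h2, icho_eq_zero_of_neg (by omega)]

lemma support_fin (m : ℕ) (r : ℤ) :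
    (Function.support fun j : ℤ => icho m (r - 5 * j)).Finite := by
  apply Set.Finite.subset (Set.finite_Icc (-(|r| + m)) (|r| + m))
  intro j hj
  simp only [Function.support, Set.mem_setOf_eq] at hj
  have h1 : 0 ≤ r - 5 * j := by
    by_contra h; exact hj (icho_eq_zero_of_neg (by omega))
  have h2 : r - 5 * j ≤ m := by
    by_contra h; exact hj (icho_eq_zero_of_lt (by omega))
  simp only [Set.mem_Icc]
  rcases abs_cases r with ⟨h3, h4⟩ | ⟨h3, h4⟩ <;> omega

noncomputable def S (m : ℕ) (r : ℤ) : ℤ := ∑ᶠ j : ℤ, icho m (r - 5 * j)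

lemma S_shift (m : ℕ) (r : ℤ) (c : ℤ) : S m (r + 5 * c) = S m r := by
  unfold S
  rw [← finsum_comp_equiv (Equiv.addRight c)]
  apply finsum_congr
  intro j
  simp [Equiv.coe_addRight]
  ring_nf

lemma S_symm (m : ℕ) (r : ℤ) : S m r = S m ((m : ℤ) - r) := by
  unfold S
  rw [← finsum_comp_equiv (Equiv.neg ℤ)]
  apply finsum_congr
  intro j
  rw [icho_symm]
  simp
  ring_nf

lemma S_pascal (m : ℕ) (r : ℤ) :
    S (m + 2) r = S m r + 2 * S m (r - 1) + S m (r - 2) := by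
  unfold S
  have key : ∀ j : ℤ, icho (m + 2) (r - 5 * j) =
      icho m (r - 5 * j) + 2 * icho m (r - 1 - 5 * j) + icho m (r - 2 - 5 * j) := by
    intro j
    have e1 : (m + 2) = (m + 1) + 1 := rfl
    rw [e1, icho_pascal, icho_pascal, icho_pascal]
    have e2 : r - 5 * j - 1 = r - 1 - 5 * j := by ring
    rw [e2]
    have e3 : r - 1 - 5 * j - 1 = r - 2 - 5 * j := by ring
    rw [e3]
    ring
  rw [finsum_congr key]
  have hf1 := support_fin m r
  have hf2 := support_fin m (r - 1)
  have hf3 := support_fin m (r - 2)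
  have hf2' : (Function.support fun j : ℤ => 2 * icho m (r - 1 - 5 * j)).Finite := by
    apply hf2.subset
    intro j hj
    simp only [Function.mem_support] at hj ⊢
    intro h; apply hj; rw [h, mul_zero]
  have hf12 : (Function.support fun j : ℤ =>
      icho m (r - 5 * j) + 2 * icho m (r - 1 - 5 * j)).Finite := by
    apply (hf1.union hf2').subset
    exact Function.support_add _ _
  rw [finsum_add_distrib hf12 hf3, finsum_add_distrib hf1 hf2', ← mul_finsum _ 2]

lemma icho_one (k : ℤ) (h0 : k ≠ 0) (h1 : k ≠ 1) : icho 1 k = 0 := by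
  rcases lt_trichotomy k 0 with h | h | h
  · exact icho_eq_zero_of_neg h
  · exact absurd h h0
  · exact icho_eq_zero_of_lt (by omega)

lemma S_one_zero : S 1 0 = 1 := by
  unfold S
  rw [finsum_eq_finset_sum_of_support_subset _ (s := ({0} : Finset ℤ))]
  · norm_num [icho]
  · intro j hj
    simp only [Function.mem_support] at hj
    simp only [Finset.coe_singleton, Set.mem_singleton_iff]
    by_contra hne
    exact hj (icho_one _ (by omega) (by omega))

lemma S_one_neg (r : ℤ) (h0 : ∀ j : ℤ, r - 5 * j ≠ 0) (h1 : ∀ j : ℤ, r - 5 * j ≠ 1) :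
    S 1 r = 0 := by
  unfold S
  apply finsum_eq_zero_of_forall_eq_zero
  intro j
  exact icho_one _ (h0 j) (h1 j)

lemma fib_step (n : ℕ) : (Nat.fib (2 * (n + 1) + 1) : ℤ) = 2 * Nat.fib (2 * n + 1) + Nat.fib (2 * n)
    ∧ (Nat.fib (2 * (n + 1)) : ℤ) = Nat.fib (2 * n + 1) + Nat.fib (2 * n) := by
  have e1 : 2 * (n + 1) + 1 = (2 * n + 1) + 2 := by ring
  have e2 : 2 * (n + 1) = 2 * n + 2 := by ring
  rw [e1, e2, Nat.fib_add_two, Nat.fib_add_two]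
  push_cast [Nat.fib_add_two]
  constructor <;> ring

lemma main_ind (n : ℕ) :
    (S (2 * n + 1) n - S (2 * n + 1) ((n : ℤ) - 1) = Nat.fib (2 * n + 1)) ∧
    (S (2 * n + 1) ((n : ℤ) - 1) - S (2 * n + 1) ((n : ℤ) - 2) = Nat.fib (2 * n)) := by
  induction n with
  | zero =>
    have h1 : S 1 (-1) = 0 := S_one_neg _ (by omega) (by omega)
    have h2 : S 1 (-2) = 0 := S_one_neg _ (by omega) (by omega)
    norm_num [S_one_zero, h1, h2]
  | succ n ih =>
    obtain ⟨ih1, ih2⟩ := ih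
    have hmc : ((2 * n + 1 : ℕ) : ℤ) = 2 * (n : ℤ) + 1 := by push_cast; ring
    have hsym : S (2 * n + 1) ((n : ℤ) + 1) = S (2 * n + 1) n := by
      rw [S_symm (2 * n + 1) ((n : ℤ) + 1), hmc,
        show 2 * (n:ℤ) + 1 - ((n:ℤ) + 1) = (n:ℤ) from by ring]
    have hper : S (2 * n + 1) ((n : ℤ) - 3) = S (2 * n + 1) ((n : ℤ) - 1) := by
      rw [S_symm (2 * n + 1) ((n : ℤ) - 3), hmc,
        show 2 * (n:ℤ) + 1 - ((n:ℤ) - 3) = ((n:ℤ) - 1) + 5 * 1 from by ring, S_shift]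
    have hM : 2 * (n + 1) + 1 = (2 * n + 1) + 2 := by omega
    have p1 : S ((2 * n + 1) + 2) ((n : ℤ) + 1)
        = S (2 * n + 1) n + 2 * S (2 * n + 1) n + S (2 * n + 1) ((n:ℤ) - 1) := by
      rw [S_pascal, show (n:ℤ) + 1 - 1 = (n:ℤ) from by ring,
        show (n:ℤ) + 1 - 2 = (n:ℤ) - 1 from by ring, hsym]
    have p2 : S ((2 * n + 1) + 2) (n : ℤ)
        = S (2 * n + 1) n + 2 * S (2 * n + 1) ((n:ℤ) - 1) + S (2 * n + 1) ((n:ℤ) - 2) :=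
      S_pascal _ _
    have p3 : S ((2 * n + 1) + 2) ((n : ℤ) - 1)
        = S (2 * n + 1) ((n:ℤ) - 1) + 2 * S (2 * n + 1) ((n:ℤ) - 2)
          + S (2 * n + 1) ((n:ℤ) - 1) := by
      rw [S_pascal, show (n:ℤ) - 1 - 1 = (n:ℤ) - 2 from by ring,
        show (n:ℤ) - 1 - 2 = (n:ℤ) - 3 from by ring, hper]
    have hc1 : ((n + 1 : ℕ) : ℤ) = (n : ℤ) + 1 := by push_cast; ring
    have hfib := fib_step n
    rw [hc1, show (n:ℤ) + 1 - 1 = (n:ℤ) from by ring,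
      show (n:ℤ) + 1 - 2 = (n:ℤ) - 1 from by ring, hfib.1, hfib.2, hM, p1, p2, p3]
    constructor <;> linarith

/-- Identity (3): `F_{2n+1} = Σ_{j ∈ ℤ} [C(2n+1, n-5j) - C(2n+1, n-5j-1)]`. -/
theorem fib_odd_binomial_sum (n : ℕ) :
    (Nat.fib (2 * n + 1) : ℤ) =
      ∑ᶠ j : ℤ, (icho (2 * n + 1) ((n : ℤ) - 5 * j) - icho (2 * n + 1) ((n : ℤ) - 5 * j - 1)) := by
  have hfun : (fun j : ℤ => icho (2 * n + 1) ((n : ℤ) - 5 * j) - icho (2 * n + 1) ((n : ℤ) - 5 * j - 1))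
      = fun j : ℤ => icho (2 * n + 1) ((n : ℤ) - 5 * j) - icho (2 * n + 1) ((n : ℤ) - 1 - 5 * j) := by
    funext j
    congr 2
    ring
  rw [hfun, finsum_sub_distrib (support_fin (2 * n + 1) n) (support_fin (2 * n + 1) ((n : ℤ) - 1))]
  exact ((main_ind n).1).symm
end

section
/- For every n ≥ 1, F_{2n-1} = Σ_{j=0}^{∞} [ B(n, 5j+1) - B(n, 5j+4) ], where B(n,k) = (k/n)·C(2n, n-k) are the entries of Catalan's triangle. -/
/-- Catalan's triangle: `B(n,k) = (k/n)·C(2n, n-k)`, which vanishes for `k > n`. -/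
def catB (n : ℕ) (k : ℤ) : ℚ := (k : ℚ) / (n : ℚ) * (icho (2 * n) ((n : ℤ) - k) : ℚ)

open Finset

def cz : ZMod 5 → ℤ := ![1, -1, 0, -1, 1]
def dz : ZMod 5 → ℤ := ![1, -2, 2, -2, 1]

lemma cz_step : ∀ x : ZMod 5, cz (x+1) + 2 * cz x + cz (x-1) = 3 * cz x - dz x := by decide
lemma dz_step : ∀ x : ZMod 5, dz (x+1) + 2 * dz x + dz (x-1) = cz x := by decide
lemma cz_sym : ∀ x : ZMod 5, cz (-1 - x) = cz x := by decide

def Sw (w : ZMod 5 → ℤ) (N : ℕ) (a : ZMod 5) : ℤ :=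
  ∑ m ∈ range (N+1), w (a - m) * (N.choose m : ℤ)

lemma pascal_step (g : ℕ → ℤ) (M : ℕ) :
    ∑ m ∈ range (M+2), g m * ((M+1).choose m : ℤ)
      = ∑ m ∈ range (M+1), (g m + g (m+1)) * (M.choose m : ℤ) := by
  rw [Finset.sum_range_succ' (fun m => g m * ((M+1).choose m : ℤ)) (M+1)]
  have h1 : ∀ m, g (m+1) * (((M+1).choose (m+1) : ℕ) : ℤ)
      = g (m+1) * (M.choose m : ℤ) + g (m+1) * (M.choose (m+1) : ℤ) := by
    intro m
    rw [Nat.choose_succ_succ]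
    push_cast
    ring
  rw [Finset.sum_congr rfl (fun m _ => h1 m), Finset.sum_add_distrib]
  have h2 : ∑ m ∈ range (M+1), g (m+1) * (M.choose (m+1) : ℤ)
      = ∑ m ∈ range (M+2), g m * (M.choose m : ℤ) - g 0 * (M.choose 0 : ℤ) := by
    rw [Finset.sum_range_succ' (fun m => g m * (M.choose m : ℤ)) (M+1)]
    ring
  rw [h2, Finset.sum_range_succ (fun m => g m * (M.choose m : ℤ)) (M+1),
    Nat.choose_succ_self]
  simp only [Nat.choose_zero_right, add_mul]
  rw [Finset.sum_add_distrib]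
  push_cast
  ring

lemma Sw_step (w : ZMod 5 → ℤ) (N : ℕ) (a : ZMod 5) :
    Sw w (N+2) a = Sw (fun x => w (x+1) + 2 * w x + w (x-1)) N (a-1) := by
  unfold Sw
  rw [show N+2+1 = (N+1)+2 from rfl, pascal_step (fun m => w (a - m)) (N+1)]
  refine Eq.trans (Finset.sum_congr rfl fun m _ => ?_)
    (Eq.trans (pascal_step (fun m : ℕ => w (a - m) + w (a - m - 1)) N)
      (Finset.sum_congr rfl fun m _ => ?_))
  · have : ((m+1 : ℕ) : ZMod 5) = (m : ZMod 5) + 1 := by push_cast; ring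
    rw [this, sub_add_eq_sub_sub]
  · have : ((m+1 : ℕ) : ZMod 5) = (m : ZMod 5) + 1 := by push_cast; ring
    rw [this]
    ring_nf

def Acat (n : ℕ) : ℤ := Sw cz (2*n-1) ((n : ZMod 5) - 1)
def Bcat (n : ℕ) : ℤ := Sw dz (2*n-1) ((n : ZMod 5) - 1)

lemma Sw_cz_rec (N : ℕ) (a : ZMod 5) :
    Sw cz (N+2) a = 3 * Sw cz N (a-1) - Sw dz N (a-1) := by
  rw [Sw_step]
  unfold Sw
  rw [Finset.mul_sum, ← Finset.sum_sub_distrib]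
  exact Finset.sum_congr rfl fun m _ => by dsimp only; rw [cz_step]; ring

lemma Sw_dz_rec (N : ℕ) (a : ZMod 5) :
    Sw dz (N+2) a = Sw cz N (a-1) := by
  rw [Sw_step]
  unfold Sw
  exact Finset.sum_congr rfl fun m _ => by dsimp only; rw [dz_step]

lemma cast_succ_zmod (n : ℕ) : ((n+1 : ℕ) : ZMod 5) - 1 - 1 = (n : ZMod 5) - 1 := by
  push_cast; ring

lemma Acat_rec (n : ℕ) (hn : 1 ≤ n) : Acat (n+1) = 3 * Acat n - Bcat n := by
  unfold Acat Bcat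
  rw [show 2*(n+1)-1 = (2*n-1)+2 by omega, Sw_cz_rec, cast_succ_zmod]

lemma Bcat_rec (n : ℕ) (hn : 1 ≤ n) : Bcat (n+1) = Acat n := by
  unfold Acat Bcat
  rw [show 2*(n+1)-1 = (2*n-1)+2 by omega, Sw_dz_rec, cast_succ_zmod]

lemma Acat_one : Acat 1 = 2 := by decide
lemma Bcat_one : Bcat 1 = 2 := by decide

lemma fib_rec (m : ℕ) : Nat.fib (m+4) + Nat.fib m = 3 * Nat.fib (m+2) := by
  have h2 : Nat.fib (m+2) = Nat.fib m + Nat.fib (m+1) := Nat.fib_add_two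
  have h3 : Nat.fib (m+3) = Nat.fib (m+1) + Nat.fib (m+2) := Nat.fib_add_two
  have h4 : Nat.fib (m+4) = Nat.fib (m+2) + Nat.fib (m+3) := Nat.fib_add_two
  omega

lemma Acat_key : ∀ k : ℕ, Acat (k+1) = 2 * (Nat.fib (2*k+1) : ℤ)
    ∧ Acat (k+2) = 2 * (Nat.fib (2*k+3) : ℤ) := by
  intro k
  induction k with
  | zero =>
    refine ⟨by rw [Acat_one]; norm_num, ?_⟩
    rw [show (2:ℕ) = 1+1 from rfl, Acat_rec 1 le_rfl, Acat_one, Bcat_one]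
    norm_num [Nat.fib]
  | succ k ih =>
    obtain ⟨h1, h2⟩ := ih
    constructor
    · rw [show 2*(k+1)+1 = 2*k+3 by omega]; exact h2
    · rw [show k+1+2 = (k+2)+1 by omega, Acat_rec (k+2) (by omega),
        show k+2 = (k+1)+1 by omega, Bcat_rec (k+1) (by omega), h1,
        show (k+1)+1 = k+2 from rfl, h2]
      have hf : (Nat.fib (2*(k+1)+3) : ℤ) + (Nat.fib (2*k+1) : ℤ)
          = 3 * (Nat.fib (2*k+3) : ℤ) := by
        have := fib_rec (2*k+1)
        push_cast [show 2*(k+1)+3 = 2*k+1+4 by omega]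
        exact_mod_cast this
      linarith

lemma Acat_eq (n : ℕ) (hn : 1 ≤ n) : Acat n = 2 * (Nat.fib (2*n-1) : ℤ) := by
  obtain ⟨k, rfl⟩ : ∃ k, n = k + 1 := ⟨n-1, by omega⟩
  rw [show 2*(k+1)-1 = 2*k+1 by omega]
  exact (Acat_key k).1

lemma icho_of_neg {m : ℕ} {j : ℤ} (h : j < 0) : icho m j = 0 := if_neg (by omega)
lemma icho_of_nonneg {m : ℕ} {j : ℤ} (h : 0 ≤ j) : icho m j = (m.choose j.toNat : ℤ) :=
  if_pos h

lemma nat_cast_zmod5 {a : ℕ} {b : ℤ} (h : (a : ℤ) = b) : (a : ZMod 5) = (b : ZMod 5) := by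
  rw [← h]; push_cast; ring

/-- key arithmetic identity: `catB n k = C(2n-1, n-k) - C(2n-1, n-k-1)` with `icho` convention -/
lemma catB_eq_diff (n : ℕ) (hn : 1 ≤ n) (k : ℤ) (hk : 1 ≤ k) :
    catB n k = ((icho (2*n-1) ((n:ℤ) - k) : ℤ) : ℚ)
      - ((icho (2*n-1) ((n:ℤ) - k - 1) : ℤ) : ℚ) := by
  rcases lt_or_ge ((n:ℤ) - k) 0 with h | h
  · rw [catB, icho_of_neg h, icho_of_neg h, icho_of_neg (by omega)]
    simp
  · set m : ℕ := ((n:ℤ) - k).toNat with hm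
    have hmk : (n:ℤ) - k = (m : ℤ) := by omega
    have hmn : m + 1 ≤ n := by omega
    rw [catB, icho_of_nonneg h]
    rcases Nat.eq_zero_or_pos m with h0 | h1
    · -- m = 0 : k = n
      have hkn : (k:ℚ) = (n:ℚ) := by
        have : (k:ℤ) = (n:ℤ) := by omega
        exact_mod_cast this
      rw [icho_of_nonneg h, icho_of_neg (by omega), hkn]
      have hn0 : (n:ℚ) ≠ 0 := by positivity
      simp [hmk, ← hm, h0, div_self hn0]
    · -- m ≥ 1
      rw [icho_of_nonneg h, icho_of_nonneg (by omega : (0:ℤ) ≤ (n:ℤ) - k - 1)]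
      rw [show ((n:ℤ) - k - 1).toNat = m - 1 by omega, ← hm]
      have e1 : 2*n-1+1 = 2*n := by omega
      have e2 : m-1+1 = m := by omega
      have key := Nat.add_one_mul_choose_eq (2*n-1) (m-1)
      have split := Nat.choose_succ_succ (2*n-1) (m-1)
      simp only [Nat.succ_eq_add_one] at key split
      rw [e1, e2] at key split
      have hn0 : (n:ℚ) ≠ 0 := by positivity
      have hkq : (k:ℚ) = (n:ℚ) - (m:ℚ) := by exact_mod_cast (show (k:ℤ) = (n:ℤ) - m by omega)
      have hB : 2*(n:ℚ) * (Nat.choose (2*n-1) (m-1) : ℚ)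
          = (m:ℚ) * (Nat.choose (2*n) m : ℚ) := by
        rw [mul_comm (m:ℚ)]; exact_mod_cast key
      have hS : (Nat.choose (2*n) m : ℚ)
          = (Nat.choose (2*n-1) (m-1) : ℚ) + (Nat.choose (2*n-1) m : ℚ) := by
        exact_mod_cast split
      rw [show (k:ℚ)/(n:ℚ) * ((Nat.choose (2*n) m : ℤ) : ℚ)
          = ((k:ℚ) * (Nat.choose (2*n) m : ℚ))/(n:ℚ) by push_cast; ring,
        div_eq_iff hn0]
      push_cast
      linear_combination (Nat.choose (2*n) m : ℚ) * hkq + (n:ℚ) * hS + hB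

example : True := trivial

def Gq (n t : ℕ) : ℚ := ((icho (2*n-1) ((n:ℤ)-1-t) : ℤ) : ℚ)

lemma Gq_zero (n t : ℕ) (h : n ≤ t) : Gq n t = 0 := by
  have : ((n:ℤ) ≤ t) := by exact_mod_cast h
  rw [Gq, icho_of_neg (by omega)]
  norm_num

lemma term_eq (n : ℕ) (hn : 1 ≤ n) (j : ℕ) :
    catB n (5*j+1) - catB n (5*j+4)
      = (Gq n (5*j) - Gq n (5*j+1)) - (Gq n (5*j+3) - Gq n (5*j+4)) := by
  have hj : (0:ℤ) ≤ (j:ℤ) := Int.natCast_nonneg j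
  rw [catB_eq_diff n hn (5*j+1) (by omega), catB_eq_diff n hn (5*j+4) (by omega)]
  simp only [Gq]
  rw [show (n:ℤ) - (5*(j:ℤ)+1) - 1 = (n:ℤ)-1-((5*j+1:ℕ):ℤ) by push_cast; ring,
    show (n:ℤ) - (5*(j:ℤ)+1) = (n:ℤ)-1-((5*j:ℕ):ℤ) by push_cast; ring,
    show (n:ℤ) - (5*(j:ℤ)+4) - 1 = (n:ℤ)-1-((5*j+4:ℕ):ℤ) by push_cast; ring,
    show (n:ℤ) - (5*(j:ℤ)+4) = (n:ℤ)-1-((5*j+3:ℕ):ℤ) by push_cast; ring]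

lemma sum_range_five_mul (h : ℕ → ℚ) (n : ℕ) :
    ∑ t ∈ range (5*n), h t
      = ∑ j ∈ range n, (h (5*j) + h (5*j+1) + h (5*j+2) + h (5*j+3) + h (5*j+4)) := by
  induction n with
  | zero => simp
  | succ n ih =>
    rw [Finset.sum_range_succ, ← ih, show 5*(n+1) = 5*n+1+1+1+1+1 by ring,
      Finset.sum_range_succ, Finset.sum_range_succ, Finset.sum_range_succ,
      Finset.sum_range_succ, Finset.sum_range_succ,
      show 5*n+1+1 = 5*n+2 by ring, show 5*n+1+1+1 = 5*n+3 by ring,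
      show 5*n+1+1+1+1 = 5*n+4 by ring]
    ring

lemma zmod5_five : ((5 : ℕ) : ZMod 5) = 0 := by decide

lemma zmod_block (j r : ℕ) : ((5*j+r : ℕ) : ZMod 5) = (r : ZMod 5) := by
  push_cast
  rw [show ((5:ZMod 5)) = 0 by decide]
  ring

lemma block_eval (n : ℕ) (j : ℕ) :
    ((cz ((5*j : ℕ) : ZMod 5) : ℤ):ℚ) * Gq n (5*j)
      + ((cz ((5*j+1 : ℕ) : ZMod 5) : ℤ):ℚ) * Gq n (5*j+1)
      + ((cz ((5*j+2 : ℕ) : ZMod 5) : ℤ):ℚ) * Gq n (5*j+2)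
      + ((cz ((5*j+3 : ℕ) : ZMod 5) : ℤ):ℚ) * Gq n (5*j+3)
      + ((cz ((5*j+4 : ℕ) : ZMod 5) : ℤ):ℚ) * Gq n (5*j+4)
      = (Gq n (5*j) - Gq n (5*j+1)) - (Gq n (5*j+3) - Gq n (5*j+4)) := by
  rw [show ((5*j : ℕ) : ZMod 5) = ((0:ℕ) : ZMod 5) from zmod_block j 0,
    zmod_block j 1, zmod_block j 2, zmod_block j 3, zmod_block j 4]
  norm_num [show cz (0:ZMod 5) = 1 by decide, show cz (1:ZMod 5) = -1 by decide,
    show cz (2:ZMod 5) = 0 by decide, show cz (3:ZMod 5) = -1 by decide,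
    show cz (4:ZMod 5) = 1 by decide]
  ring

lemma zmod_cast_sub (n t : ℕ) (h : t + 1 ≤ n) :
    ((n-1-t : ℕ) : ZMod 5) = (n : ZMod 5) - 1 - (t : ZMod 5) := by
  have := nat_cast_zmod5 (show ((n-1-t:ℕ):ℤ) = (n:ℤ)-1-t by omega)
  rw [this]
  push_cast
  ring

lemma reflect_eq (n : ℕ) (hn : 1 ≤ n) :
    ∑ t ∈ range n, ((cz t : ℤ):ℚ) * Gq n t
      = ∑ m ∈ range n,
          ((cz ((n:ZMod 5)-1-m) : ℤ):ℚ) * ((Nat.choose (2*n-1) m : ℕ):ℚ) := by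
  rw [← Finset.sum_range_reflect
    (fun m => ((cz ((n:ZMod 5)-1-m) : ℤ):ℚ) * ((Nat.choose (2*n-1) m : ℕ):ℚ)) n]
  apply Finset.sum_congr rfl
  intro t ht
  rw [Finset.mem_range] at ht
  have h1 : ((n-1-t : ℕ) : ZMod 5) = (n : ZMod 5) - 1 - (t : ZMod 5) := zmod_cast_sub n t ht
  rw [h1, show (n:ZMod 5)-1-((n:ZMod 5)-1-(t:ZMod 5)) = (t:ZMod 5) by ring]
  congr 1
  rw [Gq, icho_of_nonneg (show (0:ℤ) ≤ (n:ℤ)-1-t by omega),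
    show ((n:ℤ)-1-(t:ℤ)).toNat = n-1-t by omega]
  norm_cast

lemma Acat_half (n : ℕ) (hn : 1 ≤ n) :
    Acat n = 2 * ∑ m ∈ range n, cz ((n:ZMod 5)-1-m) * (Nat.choose (2*n-1) m : ℤ) := by
  have h0 : Acat n = ∑ m ∈ range (2*n), cz ((n:ZMod 5)-1-m) * (Nat.choose (2*n-1) m : ℤ) := by
    unfold Acat Sw
    rw [show (2*n-1)+1 = 2*n by omega]
  have hrange : range (2*n) = range (n+n) := by rw [two_mul]
  have hsplit : ∑ m ∈ range (2*n), cz ((n:ZMod 5)-1-m) * (Nat.choose (2*n-1) m : ℤ)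
      = ∑ m ∈ range n, cz ((n:ZMod 5)-1-m) * (Nat.choose (2*n-1) m : ℤ)
        + ∑ m ∈ range n, cz ((n:ZMod 5)-1-((n+m:ℕ) : ZMod 5)) * (Nat.choose (2*n-1) (n+m) : ℤ) := by
    rw [hrange]
    exact Finset.sum_range_add (fun m => cz ((n:ZMod 5)-1-(m : ZMod 5)) * (Nat.choose (2*n-1) m : ℤ)) n n
  rw [h0, hsplit]
  have h1 : ∀ m ∈ range n,
      cz ((n:ZMod 5)-1-((n+m : ℕ) : ZMod 5)) * (Nat.choose (2*n-1) (n+m) : ℤ)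
        = (fun m : ℕ => cz ((n:ZMod 5)-1-(m : ZMod 5)) * (Nat.choose (2*n-1) m : ℤ)) (n-1-m) := by
    intro m hm
    rw [Finset.mem_range] at hm
    dsimp only
    have e1 : ((n+m : ℕ) : ZMod 5) = (n : ZMod 5) + m := by push_cast; ring
    have e2 : (n:ZMod 5) - 1 - ((n:ZMod 5) + m) = -1 - (m : ZMod 5) := by ring
    have e3 : Nat.choose (2*n-1) (n+m) = Nat.choose (2*n-1) (n-1-m) := by
      rw [show n-1-m = (2*n-1) - (n+m) by omega]
      exact (Nat.choose_symm (by omega : n+m ≤ 2*n-1)).symm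
    rw [e1, e2, cz_sym, e3, zmod_cast_sub n m hm,
      show (n:ZMod 5)-1-((n:ZMod 5)-1-(m:ZMod 5)) = (m:ZMod 5) by ring]
  rw [Finset.sum_congr rfl h1,
    Finset.sum_range_reflect (fun m : ℕ => cz ((n:ZMod 5)-1-(m : ZMod 5)) * (Nat.choose (2*n-1) m : ℤ)) n]
  ring

/-- Identity (11): `F_{2n-1} = Σ_{j≥0} [B(n, 5j+1) - B(n, 5j+4)]` for `n ≥ 1`. -/
theorem fib_catalan_triangle_sum (n : ℕ) (hn : 1 ≤ n) :
    (Nat.fib (2 * n - 1) : ℚ) =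
      ∑ᶠ j : ℕ, (catB n (5 * j + 1) - catB n (5 * j + 4)) := by
  have hsupp : Function.support (fun j : ℕ => catB n (5*j+1) - catB n (5*j+4))
      ⊆ ↑(Finset.range n) := by
    intro j hj
    simp only [Function.mem_support] at hj
    by_contra hjn
    simp only [Finset.coe_range, Set.mem_Iio, not_lt] at hjn
    apply hj
    have hjz : (n:ℤ) ≤ (j:ℤ) := by exact_mod_cast hjn
    have h1 : catB n (5*j+1) = 0 := by
      rw [catB, icho_of_neg (by omega)]; norm_num
    have h4 : catB n (5*j+4) = 0 := by
      rw [catB, icho_of_neg (by omega)]; norm_num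
    rw [h1, h4, sub_self]
  rw [finsum_eq_sum_of_support_subset _ hsupp]
  rw [Finset.sum_congr rfl (fun j _ => term_eq n hn j)]
  have hblock : ∑ j ∈ range n, ((Gq n (5*j) - Gq n (5*j+1)) - (Gq n (5*j+3) - Gq n (5*j+4)))
      = ∑ t ∈ range (5*n), ((cz t : ℤ):ℚ) * Gq n t := by
    rw [sum_range_five_mul (fun t => ((cz t : ℤ):ℚ) * Gq n t) n]
    exact Finset.sum_congr rfl fun j _ => (block_eval n j).symm
  rw [hblock]
  have hcut : ∑ t ∈ range (5*n), ((cz t : ℤ):ℚ) * Gq n t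
      = ∑ t ∈ range n, ((cz t : ℤ):ℚ) * Gq n t := by
    symm
    apply Finset.sum_subset (Finset.range_subset_range.mpr (by omega))
    intro t _ htn
    rw [Finset.mem_range, not_lt] at htn
    rw [Gq_zero n t htn, mul_zero]
  rw [hcut, reflect_eq n hn]
  have hcast := congrArg (fun z : ℤ => (z : ℚ)) ((Acat_half n hn).symm.trans (Acat_eq n hn))
  push_cast at hcast
  have h2 : (2:ℚ) ≠ 0 := by norm_num
  have := mul_left_cancel₀ h2 hcast
  rw [← this]
end

section
/- For every n ≥ 1, F_{2n-2} = Σ_{j=0}^{∞} [ B(n, 5j+2) - B(n, 5j+3) ], where B(n,k) = (k/n)·C(2n, n-k) are the entries of Catalan's triangle. -/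
/- Auxiliary development -/

def Dz (n : ℕ) (k : ℤ) : ℤ := icho (2*n-1) ((n:ℤ) - k) - icho (2*n-1) ((n:ℤ) - 1 - k)

def c0 (k : ℕ) : ℤ := if k % 5 = 2 then 1 else if k % 5 = 3 then -1 else 0

def c1 (k : ℕ) : ℤ := if k % 5 = 1 ∨ k % 5 = 2 then 1 else
  if k % 5 = 3 ∨ k % 5 = 4 then -1 else 0

def Tw (w : ℕ → ℤ) (n : ℕ) : ℤ := ∑ k ∈ Finset.range (n+2), w k * Dz n k

lemma icho_neg (m : ℕ) (j : ℤ) (h : j < 0) : icho m j = 0 := by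
  simp [icho, not_le.2 h]

lemma icho_succ (m : ℕ) (j : ℤ) : icho (m+1) j = icho m j + icho m (j-1) := by
  unfold icho
  rcases lt_trichotomy j 0 with h | rfl | h
  · rw [if_neg (by omega), if_neg (by omega), if_neg (by omega)]; ring
  · simp
  · obtain ⟨t, rfl⟩ : ∃ t : ℕ, j = (t : ℤ) + 1 := ⟨(j-1).toNat, by omega⟩
    rw [if_pos (by omega), if_pos (by omega), if_pos (by omega)]
    have h1 : ((t:ℤ)+1).toNat = t + 1 := by omega
    have h2 : ((t:ℤ)+1-1).toNat = t := by omega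
    rw [h1, h2, Nat.choose_succ_succ]
    push_cast; ring

lemma Dz_eq_zero_of_gt (n : ℕ) (k : ℤ) (h : (n:ℤ) < k) : Dz n k = 0 := by
  rw [Dz, icho_neg _ _ (by omega), icho_neg _ _ (by omega)]
  ring

lemma Dz_zero (n : ℕ) (hn : 1 ≤ n) : Dz n 0 = 0 := by
  have hs : (2*n-1).choose (2*n-1 - n) = (2*n-1).choose n := Nat.choose_symm (by omega)
  have h1 : (2*n-1) - n = n - 1 := by omega
  rw [h1] at hs
  rw [Dz, icho, icho, if_pos (by omega), if_pos (by omega)]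
  have h2 : ((n:ℤ) - 0).toNat = n := by omega
  have h3 : ((n:ℤ) - 1 - 0).toNat = n - 1 := by omega
  rw [h2, h3, hs]
  ring

lemma Dz_pascal (n : ℕ) (hn : 1 ≤ n) (k : ℤ) :
    Dz (n+1) k = Dz n (k-1) + 2 * Dz n k + Dz n (k+1) := by
  have hm : 2*(n+1)-1 = (2*n-1) + 1 + 1 := by omega
  have A : ∀ j j' : ℤ, j = j' → icho (2*n-1) j = icho (2*n-1) j' := fun _ _ h => by rw [h]
  unfold Dz
  rw [hm]
  simp only [icho_succ]
  push_cast
  ring_nf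

lemma catB_eq_Dz (n : ℕ) (hn : 1 ≤ n) (k : ℕ) : catB n (k : ℤ) = (Dz n (k : ℤ) : ℚ) := by
  rcases Nat.eq_zero_or_pos k with rfl | hk
  · simp only [Nat.cast_zero, Dz_zero n hn]
    simp [catB]
  rcases lt_or_ge n k with h | hkn
  · -- k > n : both sides vanish
    rw [Dz_eq_zero_of_gt n k (by exact_mod_cast h), catB,
      icho_neg _ _ (by omega)]
    simp
  rcases eq_or_lt_of_le hkn with rfl | hlt
  · -- k = n
    rw [catB, Dz]
    have h1 : (k:ℤ) - k = 0 := by ring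
    have h2 : (k:ℤ) - 1 - k = -1 := by ring
    rw [h1, h2, icho_neg (2*k-1) (-1) (by omega)]
    simp only [icho, if_pos (le_refl (0:ℤ)), Int.toNat_zero, Nat.choose_zero_right,
      Nat.cast_one, sub_zero]
    have hn0 : (k:ℚ) ≠ 0 := Nat.cast_ne_zero.mpr (by omega)
    field_simp
    norm_cast
  · -- 1 ≤ k < n
    have key1 : (2*n) * ((2*n-1).choose (n-k-1)) = (n-k) * ((2*n).choose (n-k)) := by
      have h := Nat.add_one_mul_choose_eq (2*n-1) (n-k-1)
      have e1 : 2*n-1+1 = 2*n := by omega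
      have e2 : n-k-1+1 = n-k := by omega
      rw [e1] at h
      rw [e2] at h
      rw [h]; ring
    have key2 : (2*n) * ((2*n-1).choose (n-k)) = (n+k) * ((2*n).choose (n-k)) := by
      have hs : (2*n-1).choose (2*n-1 - (n-k)) = (2*n-1).choose (n-k) :=
        Nat.choose_symm (by omega)
      have e0 : 2*n-1 - (n-k) = n+k-1 := by omega
      rw [e0] at hs
      have h := Nat.add_one_mul_choose_eq (2*n-1) (n+k-1)
      have e1 : 2*n-1+1 = 2*n := by omega
      have e2 : n+k-1+1 = n+k := by omega
      rw [e1] at h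
      rw [e2] at h
      have hs2 : (2*n).choose (2*n - (n+k)) = (2*n).choose (n+k) :=
        Nat.choose_symm (by omega)
      have e3 : 2*n - (n+k) = n-k := by omega
      rw [e3] at hs2
      rw [← hs, h, ← hs2]; ring
    rw [catB, Dz, icho, icho, icho, if_pos (by omega), if_pos (by omega), if_pos (by omega)]
    have t1 : ((n:ℤ) - k).toNat = n - k := by omega
    have t2 : ((n:ℤ) - 1 - k).toNat = n - k - 1 := by omega
    rw [t1, t2]
    have hn0 : (n:ℚ) ≠ 0 := by positivity
    rw [div_mul_eq_mul_div, div_eq_iff hn0]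
    push_cast
    have q1 : ((2*n : ℕ) : ℚ) * ((2*n-1).choose (n-k-1) : ℚ)
        = ((n-k : ℕ) : ℚ) * ((2*n).choose (n-k) : ℚ) := by exact_mod_cast congrArg (Nat.cast : ℕ → ℚ) key1
    have q2 : ((2*n : ℕ) : ℚ) * ((2*n-1).choose (n-k) : ℚ)
        = ((n+k : ℕ) : ℚ) * ((2*n).choose (n-k) : ℚ) := by exact_mod_cast congrArg (Nat.cast : ℕ → ℚ) key2
    push_cast [Nat.cast_sub (by omega : k ≤ n)] at q1 q2
    nlinarith [q1, q2]

lemma Dz_nat_zero_of_gt (n k : ℕ) (h : n < k) : Dz n (k : ℤ) = 0 :=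
  Dz_eq_zero_of_gt n k (by exact_mod_cast h)

lemma Tw_congr (n : ℕ) (hn : 1 ≤ n) (w w' : ℕ → ℤ) (h : ∀ k, 1 ≤ k → w k = w' k) :
    Tw w n = Tw w' n := by
  unfold Tw
  refine Finset.sum_congr rfl fun k _ => ?_
  rcases Nat.eq_zero_or_pos k with rfl | hk
  · rw [Nat.cast_zero, Dz_zero n hn, mul_zero, mul_zero]
  · rw [h k hk]

lemma Tw_step (w : ℕ → ℤ) (hw : w 0 = 0) (n : ℕ) (hn : 1 ≤ n) :
    Tw w (n+1) = Tw (fun k => (if 1 ≤ k then w (k-1) else 0) + 2 * w k + w (k+1)) n := by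
  unfold Tw
  have hrec : ∀ k ∈ Finset.range (n+3), w k * Dz (n+1) (k:ℤ)
      = w k * Dz n ((k:ℤ)-1) + 2 * w k * Dz n (k:ℤ) + w k * Dz n ((k:ℤ)+1) := by
    intro k _
    rw [Dz_pascal n hn (k:ℤ)]
    ring
  rw [show n+1+2 = n+3 from rfl, Finset.sum_congr rfl hrec, Finset.sum_add_distrib,
    Finset.sum_add_distrib]
  have S1 : ∑ k ∈ Finset.range (n+3), w k * Dz n ((k:ℤ)-1)
      = ∑ k ∈ Finset.range (n+2), w (k+1) * Dz n (k:ℤ) := by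
    rw [Finset.sum_range_succ' (fun k => w k * Dz n ((k:ℤ)-1)) (n+2)]
    simp only [hw, zero_mul, add_zero]
    refine Finset.sum_congr rfl fun k _ => ?_
    congr 1
    push_cast; ring
  have S2 : ∑ k ∈ Finset.range (n+3), 2 * w k * Dz n (k:ℤ)
      = ∑ k ∈ Finset.range (n+2), 2 * w k * Dz n (k:ℤ) := by
    rw [Finset.sum_range_succ, Dz_nat_zero_of_gt n (n+2) (by omega), mul_zero, add_zero]
  have S3 : ∑ k ∈ Finset.range (n+3), w k * Dz n ((k:ℤ)+1)
      = ∑ k ∈ Finset.range (n+2), (if 1 ≤ k then w (k-1) else 0) * Dz n (k:ℤ) := by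
    have L : ∑ k ∈ Finset.range (n+3), w k * Dz n ((k:ℤ)+1)
        = ∑ k ∈ Finset.range (n+1), w k * Dz n ((k:ℤ)+1) := by
      rw [Finset.sum_range_succ, Finset.sum_range_succ]
      have z1 : Dz n (((n+2:ℕ):ℤ)+1) = 0 := Dz_eq_zero_of_gt n _ (by push_cast; omega)
      have z2 : Dz n (((n+1:ℕ):ℤ)+1) = 0 := Dz_eq_zero_of_gt n _ (by push_cast; omega)
      rw [z1, z2, mul_zero, mul_zero, add_zero, add_zero]
    have R : ∑ k ∈ Finset.range (n+2), (if 1 ≤ k then w (k-1) else 0) * Dz n (k:ℤ)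
        = ∑ k ∈ Finset.range (n+1), w k * Dz n ((k:ℤ)+1) := by
      rw [Finset.sum_range_succ' (fun k => (if 1 ≤ k then w (k-1) else 0) * Dz n (k:ℤ)) (n+1)]
      simp only [show ¬ (1 ≤ 0) from by omega, if_false, zero_mul, add_zero]
      refine Finset.sum_congr rfl fun k _ => ?_
      rw [if_pos (by omega : 1 ≤ k + 1)]
      simp only [Nat.add_sub_cancel]
      push_cast
      ring
    rw [L, R]
  rw [S1, S2, S3, ← Finset.sum_add_distrib, ← Finset.sum_add_distrib]
  refine Finset.sum_congr rfl fun k _ => ?_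
  simp only [add_mul]
  ring

lemma c0_zero : c0 0 = 0 := rfl
lemma c1_zero : c1 0 = 0 := rfl

lemma Lc0_eq_c1 (k : ℕ) (hk : 1 ≤ k) :
    (if 1 ≤ k then c0 (k-1) else 0) + 2 * c0 k + c0 (k+1) = c1 k := by
  rw [if_pos hk]
  have h : k % 5 = 0 ∨ k % 5 = 1 ∨ k % 5 = 2 ∨ k % 5 = 3 ∨ k % 5 = 4 := by omega
  rcases h with h|h|h|h|h
  · have h1 : (k-1) % 5 = 4 := by omega
    have h2 : (k+1) % 5 = 1 := by omega
    simp [c0, c1, h, h1, h2]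
  · have h1 : (k-1) % 5 = 0 := by omega
    have h2 : (k+1) % 5 = 2 := by omega
    simp [c0, c1, h, h1, h2]
  · have h1 : (k-1) % 5 = 1 := by omega
    have h2 : (k+1) % 5 = 3 := by omega
    simp [c0, c1, h, h1, h2]
  · have h1 : (k-1) % 5 = 2 := by omega
    have h2 : (k+1) % 5 = 4 := by omega
    simp [c0, c1, h, h1, h2]
  · have h1 : (k-1) % 5 = 3 := by omega
    have h2 : (k+1) % 5 = 0 := by omega
    simp [c0, c1, h, h1, h2]

lemma Lc1_eq (k : ℕ) (hk : 1 ≤ k) :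
    (if 1 ≤ k then c1 (k-1) else 0) + 2 * c1 k + c1 (k+1) = 3 * c1 k - c0 k := by
  rw [if_pos hk]
  have h : k % 5 = 0 ∨ k % 5 = 1 ∨ k % 5 = 2 ∨ k % 5 = 3 ∨ k % 5 = 4 := by omega
  rcases h with h|h|h|h|h
  · have h1 : (k-1) % 5 = 4 := by omega
    have h2 : (k+1) % 5 = 1 := by omega
    simp [c0, c1, h, h1, h2]
  · have h1 : (k-1) % 5 = 0 := by omega
    have h2 : (k+1) % 5 = 2 := by omega
    norm_num [c0, c1, h, h1, h2]
  · have h1 : (k-1) % 5 = 1 := by omega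
    have h2 : (k+1) % 5 = 3 := by omega
    norm_num [c0, c1, h, h1, h2]
  · have h1 : (k-1) % 5 = 2 := by omega
    have h2 : (k+1) % 5 = 4 := by omega
    norm_num [c0, c1, h, h1, h2]
  · have h1 : (k-1) % 5 = 3 := by omega
    have h2 : (k+1) % 5 = 0 := by omega
    simp [c0, c1, h, h1, h2]

lemma key (n : ℕ) (hn : 1 ≤ n) :
    Tw c0 n = (Nat.fib (2*n-2) : ℤ) ∧ Tw c1 n = (Nat.fib (2*n) : ℤ) := by
  induction n, hn using Nat.le_induction with
  | base => constructor <;> decide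
  | succ n hn ih =>
    obtain ⟨h0, h1⟩ := ih
    have s0 : Tw c0 (n+1) = Tw c1 n := by
      rw [Tw_step c0 c0_zero n hn]
      exact Tw_congr n hn _ _ Lc0_eq_c1
    have s1 : Tw c1 (n+1) = 3 * Tw c1 n - Tw c0 n := by
      rw [Tw_step c1 c1_zero n hn, Tw_congr n hn _ _ Lc1_eq]
      unfold Tw
      rw [Finset.mul_sum, ← Finset.sum_sub_distrib]
      refine Finset.sum_congr rfl fun k _ => ?_
      simp only [sub_mul]
      ring
    constructor
    · rw [s0, h1, show 2*(n+1)-2 = 2*n from by omega]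
    · rw [s1, h0, h1]
      obtain ⟨m, hm⟩ : ∃ m, 2*n = m + 2 := ⟨2*n-2, by omega⟩
      have e1 : 2*n-2 = m := by omega
      have e2 : 2*(n+1) = m + 4 := by omega
      rw [e1, hm, e2]
      have a : Nat.fib (m+2) = Nat.fib m + Nat.fib (m+1) := Nat.fib_add_two
      have b : Nat.fib (m+3) = Nat.fib (m+1) + Nat.fib (m+2) := Nat.fib_add_two
      have c : Nat.fib (m+4) = Nat.fib (m+2) + Nat.fib (m+3) := Nat.fib_add_two
      omega

lemma sum_c0 (g : ℕ → ℤ) (M : ℕ) :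
    ∑ k ∈ Finset.range (5*M), c0 k * g k
      = ∑ j ∈ Finset.range M, (g (5*j+2) - g (5*j+3)) := by
  induction M with
  | zero => simp
  | succ M ih =>
    have hb : 5*(M+1) = (5*M)+1+1+1+1+1 := by ring
    rw [hb, Finset.sum_range_succ, Finset.sum_range_succ, Finset.sum_range_succ,
      Finset.sum_range_succ, Finset.sum_range_succ, ih, Finset.sum_range_succ]
    have e0 : c0 (5*M) = 0 := by unfold c0; rw [if_neg (by omega), if_neg (by omega)]
    have e1 : c0 (5*M+1) = 0 := by unfold c0; rw [if_neg (by omega), if_neg (by omega)]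
    have e2 : c0 (5*M+1+1) = 1 := by unfold c0; rw [if_pos (by omega)]
    have e3 : c0 (5*M+1+1+1) = -1 := by unfold c0; rw [if_neg (by omega), if_pos (by omega)]
    have e4 : c0 (5*M+1+1+1+1) = 0 := by unfold c0; rw [if_neg (by omega), if_neg (by omega)]
    rw [e0, e1, e2, e3, e4]
    have f2 : 5*M+1+1 = 5*M+2 := by ring
    have f3 : 5*M+1+1+1 = 5*M+3 := by ring
    rw [f2, f3]
    ring

lemma catB_zero_of_gt (n : ℕ) (k : ℤ) (h : (n:ℤ) < k) : catB n k = 0 := by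
  rw [catB, icho_neg _ _ (by omega)]
  simp

/-- Identity (12): `F_{2n-2} = Σ_{j≥0} [B(n, 5j+2) - B(n, 5j+3)]` for `n ≥ 1`. -/
theorem fib_catalan_triangle_sum' (n : ℕ) (hn : 1 ≤ n) :
    (Nat.fib (2 * n - 2) : ℚ) =
      ∑ᶠ j : ℕ, (catB n (5 * j + 2) - catB n (5 * j + 3)) := by
  classical
  have hsupp : (Function.support fun j : ℕ => catB n (5 * j + 2) - catB n (5 * j + 3))
      ⊆ ↑(Finset.range (n+1)) := by
    intro j hj
    simp only [Finset.coe_range, Set.mem_Iio]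
    by_contra h
    push_neg at h
    apply hj
    have h2 : catB n (5 * (j:ℤ) + 2) = 0 := catB_zero_of_gt n _ (by push_cast; omega)
    have h3 : catB n (5 * (j:ℤ) + 3) = 0 := catB_zero_of_gt n _ (by push_cast; omega)
    simp [h2, h3]
  rw [finsum_eq_finset_sum_of_support_subset _ hsupp]
  have hterm : ∀ j ∈ Finset.range (n+1), catB n (5*(j:ℤ)+2) - catB n (5*(j:ℤ)+3)
      = ((Dz n ((5*j+2 : ℕ) : ℤ) - Dz n ((5*j+3 : ℕ) : ℤ) : ℤ) : ℚ) := by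
    intro j _
    rw [show (5*(j:ℤ)+2) = ((5*j+2 : ℕ) : ℤ) from by push_cast; ring,
        show (5*(j:ℤ)+3) = ((5*j+3 : ℕ) : ℤ) from by push_cast; ring,
        catB_eq_Dz n hn, catB_eq_Dz n hn]
    push_cast; ring
  rw [Finset.sum_congr rfl hterm]
  have hz : (Nat.fib (2*n-2) : ℤ)
      = ∑ j ∈ Finset.range (n+1), (Dz n ((5*j+2 : ℕ) : ℤ) - Dz n ((5*j+3 : ℕ) : ℤ)) := by
    rw [← sum_c0 (fun k => Dz n (k:ℤ)) (n+1)]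
    have hsub : Finset.range (n+2) ⊆ Finset.range (5*(n+1)) := by
      intro x hx
      simp only [Finset.mem_range] at hx ⊢
      omega
    have hout : ∀ x ∈ Finset.range (5*(n+1)), x ∉ Finset.range (n+2)
        → c0 x * Dz n (x:ℤ) = 0 := by
      intro x _ hx
      simp only [Finset.mem_range, not_lt] at hx
      rw [Dz_nat_zero_of_gt n x (by omega), mul_zero]
    rw [← Finset.sum_subset hsub hout]
    exact (key n hn).1.symm
  calc (Nat.fib (2*n-2) : ℚ)
      = (((Nat.fib (2*n-2) : ℤ)) : ℚ) := by push_cast; ring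
    _ = _ := by rw [hz]; push_cast; ring
end
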